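/- arXiv:1201.1999 — 2 statements merged into one kernel-verified Lean document; each statement's English description precedes it below -/
import Mathlib

section
/- Let Q be an N×N real matrix whose off-diagonal entries are all nonnegative, which has a path of nonsingularity, and which satisfies 1ᵀ Q = 0 (every column of Q sums to zero). Then for every t ≥ 0 the map p₀ ↦ exp(tQ) p₀ maps the simplex Σ_N into Σ_N, and for every t > 0 it maps Σ_N into the relative interior of Σ_N (i.e. for p₀ ∈ Σ_N and t > 0, exp(tQ) p₀ has all components strictly positive and they sum to 1). -/
/-- An `N × N` real matrix `Q` (with nonnegative off-diagonal entries) has a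
*path of nonsingularity* if there are indices `i₁, …, iₙ` with `iₙ = i₁` such that
all entries `Q (i_j) (i_{j+1})` are strictly positive and `{i₁, …, iₙ}` contains
all indices. -/
def HasPathOfNonsingularity {N : ℕ} (Q : Matrix (Fin N) (Fin N) ℝ) : Prop :=
  ∃ (n : ℕ) (idx : Fin (n + 1) → Fin N),
    idx (Fin.last n) = idx 0 ∧
    (∀ j : Fin n, 0 < Q (idx j.castSucc) (idx j.succ)) ∧
    (∀ k : Fin N, ∃ j, idx j = k)

/-- The probability simplex `Σ_N` in `ℝ^N`. -/
def probSimplex (N : ℕ) : Set (Fin N → ℝ) :=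
  {p | (∑ j, p j) = 1 ∧ ∀ j, 0 ≤ p j}

/-!
For `t ≥ 0` write `t Q = A - c • 1` with `c ≥ 0` so large that `A` is entrywise nonnegative.
Then `exp (t Q) = e^{-c} exp A`, and `exp A = ∑ Aⁿ / n!` is entrywise nonnegative; its entry
`(a, b)` is even positive as soon as some power of `A` is positive there. For `t > 0` the path of
nonsingularity provides this for every pair `(a, b)`, by chaining positive entries of `A`.
Finally `1ᵀ Q = 0` kills every term but the first of `1ᵀ exp (t Q) = ∑ tⁿ 1ᵀ Qⁿ / n!`, so
`exp (t Q)` is column-stochastic and preserves the sum of a probability vector.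
-/

open NormedSpace Relation

theorem NormedSpace.mul_exp_eq_of_mul_eq_zero (𝕂 : Type*) {𝔸 : Type*} [RCLike 𝕂] [NormedRing 𝔸]
    [NormedAlgebra 𝕂 𝔸] [CompleteSpace 𝔸] {a x : 𝔸} (h : a * x = 0) : a * exp x = a := by
  have hterms : (fun n : ℕ => a * ((n.factorial : 𝕂)⁻¹ • x ^ n)) =
      fun n => if n = 0 then a else 0 := by
    funext n
    rcases n with _ | n
    · simp
    · rw [mul_smul_comm, pow_succ', ← mul_assoc, h]
      simp
  have hsum := (exp_series_hasSum_exp' (𝕂 := 𝕂) x).mul_left a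
  rw [hterms] at hsum
  exact hsum.unique (hasSum_ite_eq 0 a)

namespace HasPathOfNonsingularity

theorem reflTransGen {N : ℕ} {Q : Matrix (Fin N) (Fin N) ℝ} (h : HasPathOfNonsingularity Q)
    (a b : Fin N) : ReflTransGen (fun i j => 0 < Q i j) a b := by
  obtain ⟨n, idx, hcyc, hstep, hsurj⟩ := h
  have from_start : ∀ k, ReflTransGen (fun i j => 0 < Q i j) (idx 0) (idx k) :=
    Fin.induction .refl fun k ih => ih.tail (hstep k)
  have to_end : ∀ k, ReflTransGen (fun i j => 0 < Q i j) (idx k) (idx (Fin.last n)) :=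
    Fin.reverseInduction .refl fun k ih => ih.head (hstep k)
  obtain ⟨ka, rfl⟩ := hsurj a
  obtain ⟨kb, rfl⟩ := hsurj b
  exact (to_end ka).trans (hcyc ▸ from_start kb)

end HasPathOfNonsingularity

namespace Matrix

variable {m : Type*} [Fintype m] [DecidableEq m]

theorem exists_pow_apply_pos_of_reflTransGen {R : Type*} [Semiring R] [PartialOrder R]
    [IsStrictOrderedRing R] {A : Matrix m m R} (hA : ∀ i j, 0 ≤ A i j) {a b : m}
    (h : ReflTransGen (fun i j => 0 < A i j) a b) : ∃ k : ℕ, 0 < (A ^ k) a b := by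
  induction h with
  | refl => exact ⟨0, by simp⟩
  | @tail c d _ hcd ih =>
    obtain ⟨k, hk⟩ := ih
    refine ⟨k + 1, ?_⟩
    rw [pow_succ, mul_apply]
    exact (mul_pos hk hcd).trans_le <| Finset.single_le_sum
      (f := fun l => (A ^ k) a l * A l d)
      (fun l _ => mul_nonneg (pow_apply_nonneg hA k a l) (hA l d)) (Finset.mem_univ c)

theorem hasSum_exp_apply (A : Matrix m m ℝ) (i j : m) :
    HasSum (fun n : ℕ => (n.factorial : ℝ)⁻¹ * (A ^ n) i j) (exp A i j) := by
  -- any submultiplicative norm inducing the product topology will do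
  let : NormedRing (Matrix m m ℝ) := Matrix.linftyOpNormedRing
  let : NormedAlgebra ℝ (Matrix m m ℝ) := Matrix.linftyOpNormedAlgebra
  exact Pi.hasSum.1 (Pi.hasSum.1 (exp_series_hasSum_exp' (𝕂 := ℝ) A) i) j

theorem exp_apply_nonneg_of_nonneg {A : Matrix m m ℝ} (hA : ∀ i j, 0 ≤ A i j) (i j : m) :
    0 ≤ exp A i j :=
  (hasSum_exp_apply A i j).nonneg fun n => mul_nonneg (by positivity) (pow_apply_nonneg hA n i j)

theorem exp_apply_pos_of_pow_apply_pos {A : Matrix m m ℝ} (hA : ∀ i j, 0 ≤ A i j) {i j : m}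
    {k : ℕ} (hk : 0 < (A ^ k) i j) : 0 < exp A i j :=
  hasSum_lt (f := 0) (i := k)
    (fun n => mul_nonneg (by positivity) (pow_apply_nonneg hA n i j))
    (mul_pos (by positivity) hk) hasSum_zero (hasSum_exp_apply A i j)

theorem exp_eq_exp_neg_smul_exp_add_smul_one (A : Matrix m m ℝ) (c : ℝ) :
    exp A = Real.exp (-c) • exp (A + c • 1) := by
  have hcomm : Commute (A + c • 1) ((-c) • 1) := (Commute.one_right _).smul_right _
  have hexp : exp ((-c) • (1 : Matrix m m ℝ)) = Real.exp (-c) • 1 := by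
    rw [smul_one_eq_diagonal, smul_one_eq_diagonal, exp_diagonal, Pi.exp_def, Real.exp_eq_exp_ℝ]
  calc exp A = exp ((A + c • 1) + (-c) • 1) := by rw [neg_smul, add_neg_cancel_right]
    _ = Real.exp (-c) • exp (A + c • 1) := by
      rw [exp_add_of_commute _ _ hcomm, hexp, mul_smul_comm, mul_one]

variable {Q : Matrix m m ℝ}

theorem exists_add_smul_one_nonneg (hQ : ∀ i j, i ≠ j → 0 ≤ Q i j) :
    ∃ c : ℝ, (∀ i j, 0 ≤ (Q + c • 1) i j) ∧ ∀ i j, 0 < Q i j → 0 < (Q + c • 1) i j := by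
  refine ⟨∑ k, |Q k k|, fun i j => ?_, fun i j hij => ?_⟩ <;>
    obtain rfl | hne := eq_or_ne i j
  · have : |Q i i| ≤ ∑ k, |Q k k| :=
      Finset.single_le_sum (f := fun k => |Q k k|) (fun k _ => abs_nonneg _) (Finset.mem_univ i)
    simp only [add_apply, smul_apply, one_apply_eq, smul_eq_mul, mul_one]
    linarith [neg_abs_le (Q i i)]
  · simpa [one_apply_ne hne] using hQ i j hne
  · simp only [add_apply, smul_apply, one_apply_eq, smul_eq_mul, mul_one]
    exact add_pos_of_pos_of_nonneg hij (Finset.sum_nonneg fun k _ => abs_nonneg _)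
  · simpa [one_apply_ne hne] using hij

theorem exp_apply_nonneg_of_offDiag_nonneg (hQ : ∀ i j, i ≠ j → 0 ≤ Q i j) (i j : m) :
    0 ≤ exp Q i j := by
  obtain ⟨c, hnonneg, -⟩ := exists_add_smul_one_nonneg hQ
  rw [exp_eq_exp_neg_smul_exp_add_smul_one Q c, smul_apply, smul_eq_mul]
  exact mul_nonneg (Real.exp_pos _).le (exp_apply_nonneg_of_nonneg hnonneg i j)

theorem exp_apply_pos_of_reflTransGen (hQ : ∀ i j, i ≠ j → 0 ≤ Q i j) {a b : m}
    (h : ReflTransGen (fun i j => 0 < Q i j) a b) : 0 < exp Q a b := by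
  obtain ⟨c, hnonneg, hpos⟩ := exists_add_smul_one_nonneg hQ
  obtain ⟨k, hk⟩ := exists_pow_apply_pos_of_reflTransGen hnonneg (ReflTransGen.mono hpos _ _ h)
  rw [exp_eq_exp_neg_smul_exp_add_smul_one Q c, smul_apply, smul_eq_mul]
  exact mul_pos (Real.exp_pos _) (exp_apply_pos_of_pow_apply_pos hnonneg hk)

theorem sum_exp_apply_eq_one (hQ : ∀ j, ∑ i, Q i j = 0) (j : m) :
    ∑ i, exp Q i j = 1 := by
  let : NormedRing (Matrix m m ℝ) := Matrix.linftyOpNormedRing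
  let : NormedAlgebra ℝ (Matrix m m ℝ) := Matrix.linftyOpNormedAlgebra
  let J : Matrix m m ℝ := of fun _ _ => 1
  have hJ : J * Q = 0 := by
    ext i k
    simp [J, mul_apply, hQ]
  have hJexp := mul_exp_eq_of_mul_eq_zero ℝ hJ
  have hentry := congrFun (congrFun hJexp j) j
  simp only [J, mul_apply, of_apply, one_mul] at hentry
  exact hentry

theorem exp_mem_colStochastic (hoff : ∀ i j, i ≠ j → 0 ≤ Q i j)
    (hcol : ∀ j, ∑ i, Q i j = 0) : exp Q ∈ colStochastic ℝ m :=
  mem_colStochastic_iff_sum.2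
    ⟨exp_apply_nonneg_of_offDiag_nonneg hoff, sum_exp_apply_eq_one hcol⟩

end Matrix

open Matrix

section Simplex

variable {N : ℕ}

theorem mulVec_mem_probSimplex {M : Matrix (Fin N) (Fin N) ℝ} (hM : M ∈ colStochastic ℝ (Fin N))
    {p : Fin N → ℝ} (hp : p ∈ probSimplex N) : M *ᵥ p ∈ probSimplex N :=
  ⟨(sum_mulVec_of_mem_colStochastic hM).trans hp.1, nonneg_mulVec_of_mem_colStochastic hM hp.2⟩

theorem mulVec_pos_of_mem_probSimplex {M : Matrix (Fin N) (Fin N) ℝ} (hM : ∀ i j, 0 < M i j)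
    {p : Fin N → ℝ} (hp : p ∈ probSimplex N) (i : Fin N) : 0 < (M *ᵥ p) i := by
  obtain ⟨j, -, hj⟩ := Finset.exists_lt_of_sum_lt (f := 0) (s := Finset.univ) (g := p)
    (by simp [hp.1])
  exact Finset.sum_pos' (fun k _ => mul_nonneg (hM i k).le (hp.2 k))
    ⟨j, Finset.mem_univ j, mul_pos (hM i j) hj⟩

end Simplex

/-- If `Q` has nonnegative off-diagonal entries, a path of nonsingularity, and all its
columns sum to zero, then `exp (t Q)` maps the simplex `Σ_N` into itself for `t ≥ 0`,
and into its relative interior (componentwise strictly positive vectors summing to `1`)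
for `t > 0`. -/
theorem exp_mulVec_simplex_invariant {N : ℕ}
    (Q : Matrix (Fin N) (Fin N) ℝ)
    (hoff : ∀ i j : Fin N, i ≠ j → 0 ≤ Q i j)
    (hpath : HasPathOfNonsingularity Q)
    (hcol : ∀ j, ∑ i, Q i j = 0) :
    (∀ t : ℝ, 0 ≤ t → ∀ p₀ ∈ probSimplex N,
        (NormedSpace.exp (t • Q)).mulVec p₀ ∈ probSimplex N) ∧
    (∀ t : ℝ, 0 < t → ∀ p₀ ∈ probSimplex N,
        (∑ i, (NormedSpace.exp (t • Q)).mulVec p₀ i) = 1 ∧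
          ∀ i, 0 < (NormedSpace.exp (t • Q)).mulVec p₀ i) := by
  have hoff_smul : ∀ t : ℝ, 0 ≤ t → ∀ i j, i ≠ j → 0 ≤ (t • Q) i j :=
    fun t ht i j hij => mul_nonneg ht (hoff i j hij)
  have hcol_smul : ∀ (t : ℝ) j, ∑ i, (t • Q) i j = 0 := fun t j => by
    simp [← Finset.mul_sum, hcol]
  have hmaps : ∀ t : ℝ, 0 ≤ t → ∀ p₀ ∈ probSimplex N, exp (t • Q) *ᵥ p₀ ∈ probSimplex N :=
    fun t ht p₀ hp₀ =>
      mulVec_mem_probSimplex (exp_mem_colStochastic (hoff_smul t ht) (hcol_smul t)) hp₀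
  refine ⟨hmaps, fun t ht p₀ hp₀ => ⟨(hmaps t ht.le p₀ hp₀).1, ?_⟩⟩
  have hreach : ∀ a b, ReflTransGen (fun i j => 0 < (t • Q) i j) a b := fun a b =>
    ReflTransGen.mono (fun i j hij => (mul_pos ht hij : 0 < (t • Q) i j)) _ _
      (hpath.reflTransGen a b)
  exact mulVec_pos_of_mem_probSimplex
    (fun a b => exp_apply_pos_of_reflTransGen (hoff_smul t ht.le) (hreach a b)) hp₀
end

section
/- Fix constants 0 < c ≤ C and N ≥ 2. Let Q : ℝ → M_N(ℝ) be a measurable family of tridiagonal generators with off-diagonal entries in [c, C]. Let Q̄ be a constant N×N matrix such that Q̄_{ij} ≤ Q(t)_{ij} for all i, j and all t (entrywise), and such that the off-diagonal entries of Q̄ on the sub- and superdiagonal are ≥ c > 0 and all other off-diagonal entries of Q̄ are 0. Then for every p₀ ∈ ℝ^N with all components ≥ 0 and every continuous p : [0,∞) → ℝ^N satisfying p(t) = p₀ + ∫₀ᵗ Q(s) p(s) ds for all t ≥ 0, one has the componentwise inequality p(t) ≥ exp(tQ̄) p₀ for all t ≥ 0. -/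
/-!
Both `p` and `q t = exp (t Q̄) p₀` solve linear systems `x' = A(t) x + f` whose matrices are
bounded and Metzler (nonnegative off the diagonal), with forcing `f ≥ 0`; such systems keep the
nonnegative orthant invariant. Indeed, after multiplying by `e^{Kt}` the matrix `A + K` becomes
entrywise nonnegative, and then the sum of the negative parts of the components satisfies a
homogeneous Grönwall inequality, so it vanishes. Applied to `p` this gives `p ≥ 0`; applied to
`p - q`, which solves `(p - q)' = Q̄ (p - q) + (Q - Q̄) p` with `(Q - Q̄) p ≥ 0`, it gives `p ≥ q`.
-/

open MeasureTheory Set Real Matrix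

/-- A *measurable family of tridiagonal generators with off-diagonal entries in
`[c, C]`*: a measurable map `Q : ℝ → M_N(ℝ)` such that for every `t` the matrix
`Q t` vanishes off the three central diagonals, has its sub- and super-diagonal
entries in `[c, C]`, and all its columns sum to zero. -/
def IsTridiagGenFamily (N : ℕ) (c C : ℝ) (Q : ℝ → Matrix (Fin N) (Fin N) ℝ) : Prop :=
  (∀ i j : Fin N, Measurable fun t => Q t i j) ∧
  ∀ t : ℝ,
    (∀ i j : Fin N, ((i : ℕ) + 2 ≤ (j : ℕ) ∨ (j : ℕ) + 2 ≤ (i : ℕ)) → Q t i j = 0) ∧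
    (∀ i j : Fin N, ((i : ℕ) + 1 = (j : ℕ) ∨ (j : ℕ) + 1 = (i : ℕ)) →
      Q t i j ∈ Set.Icc c C) ∧
    (∀ j, ∑ i, Q t i j = 0)

def Matrix.IsMetzler {n R : Type*} [Zero R] [LE R] (A : Matrix n n R) : Prop :=
  ∀ i j, i ≠ j → 0 ≤ A i j

section

variable {ι : Type*} [Fintype ι]

theorem MeasureTheory.LocallyIntegrable.intervalIntegrable {E : Type*} [NormedAddCommGroup E]
    {g : ℝ → E} (hg : LocallyIntegrable g) (a b : ℝ) : IntervalIntegrable g volume a b :=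
  (hg.integrableOn_isCompact isCompact_uIcc).intervalIntegrable

theorem IntervalIntegrable.eval {g : ℝ → ι → ℝ} {a b : ℝ}
    (hg : IntervalIntegrable g volume a b) (i : ι) :
    IntervalIntegrable (fun s => g s i) volume a b :=
  ⟨hg.1.eval i, hg.2.eval i⟩

theorem intervalIntegral.integral_apply {g : ℝ → ι → ℝ} {a b : ℝ}
    (hg : IntervalIntegrable g volume a b) (i : ι) :
    (∫ s in a..b, g s) i = ∫ s in a..b, g s i :=
  ((ContinuousLinearMap.proj (R := ℝ) i).intervalIntegral_comp_comm hg).symm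

theorem eq_zero_of_le_mul_integral {m : ℝ → ℝ} {K : ℝ} (hm : Continuous m) (hm0 : 0 ≤ m)
    (h : ∀ t, 0 ≤ t → m t ≤ K * ∫ s in (0 : ℝ)..t, m s) : ∀ t, 0 ≤ t → m t = 0 := by
  intro t ht
  have hM : ∀ x ∈ Icc 0 t, ∫ s in (0 : ℝ)..x, m s = 0 :=
    eq_zero_of_abs_deriv_le_mul_abs_self_of_eq_zero_right
      (intervalIntegral.continuous_primitive (fun a b => hm.intervalIntegrable a b) 0).continuousOn
      (fun x _ => (hm.integral_hasStrictDerivAt 0 x).hasDerivAt.hasDerivWithinAt)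
      intervalIntegral.integral_same
      (fun x hx => by
        rw [Real.norm_of_nonneg (hm0 x),
          Real.norm_of_nonneg (intervalIntegral.integral_nonneg hx.1 fun s _ => hm0 s)]
        exact h x hx.1)
  exact le_antisymm (by simpa [hM t ⟨ht, le_rfl⟩] using h t ht) (hm0 t)

theorem exp_mul_mul_add_integral {g : ℝ → ℝ} {t : ℝ} (hg : IntervalIntegrable g volume 0 t)
    (K v : ℝ) :
    exp (K * t) * (v + ∫ s in (0 : ℝ)..t, g s) =
      v + ∫ s in (0 : ℝ)..t, exp (K * s) * (g s + K * (v + ∫ r in (0 : ℝ)..s, g r)) := by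
  have hE : AbsolutelyContinuousOnInterval (fun s => exp (K * s)) 0 t :=
    ContDiffOn.absolutelyContinuousOnInterval (by fun_prop)
  have hX : AbsolutelyContinuousOnInterval (fun s => v + ∫ r in (0 : ℝ)..s, g r) 0 t :=
    (ContDiffOn.absolutelyContinuousOnInterval (f := fun _ : ℝ => v) contDiffOn_const).add
      (hg.absolutelyContinuousOnInterval_intervalIntegral left_mem_uIcc)
  have hparts := hE.integral_deriv_mul_eq_sub hX
  rw [intervalIntegral.integral_congr_ae (g := fun s => exp (K * s) *
    (g s + K * (v + ∫ r in (0 : ℝ)..s, g r)))] at hparts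
  · simp only [mul_zero, exp_zero, one_mul, intervalIntegral.integral_same, add_zero] at hparts
    linarith
  filter_upwards [hg.ae_hasDerivAt_integral] with s hs hsI
  have hs := hs (uIoc_subset_uIcc hsI) 0 left_mem_uIcc
  rw [((hasDerivAt_id' s).const_mul K |>.exp).deriv, (hs.const_add v).deriv]
  ring

theorem exp_mul_smul_add_integral {g : ℝ → ι → ℝ} (hg : LocallyIntegrable g) (K : ℝ)
    (v : ι → ℝ) (t : ℝ) :
    exp (K * t) • (v + ∫ s in (0 : ℝ)..t, g s) =
      v + ∫ s in (0 : ℝ)..t, exp (K * s) • (g s + K • (v + ∫ r in (0 : ℝ)..s, g r)) := by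
  have hX : Continuous fun s => v + ∫ r in (0 : ℝ)..s, g r :=
    continuous_const.add (intervalIntegral.continuous_primitive hg.intervalIntegrable 0)
  have hG : LocallyIntegrable fun s => exp (K * s) • (g s + K • (v + ∫ r in (0 : ℝ)..s, g r)) :=
    (hg.add (hX.const_smul K).locallyIntegrable).continuous_smul (by fun_prop)
  have hev : ∀ s i, (∫ r in (0 : ℝ)..s, g r) i = ∫ r in (0 : ℝ)..s, g r i :=
    fun s => intervalIntegral.integral_apply (hg.intervalIntegrable 0 s)
  ext i
  simp only [Pi.smul_apply, Pi.add_apply, smul_eq_mul,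
    intervalIntegral.integral_apply (hG.intervalIntegrable 0 t), hev]
  exact exp_mul_mul_add_integral ((hg.intervalIntegrable 0 t).eval i) K (v i)

theorem Matrix.mulVec_le_mulVec_of_le {A B : Matrix ι ι ℝ} (hAB : ∀ i j, A i j ≤ B i j)
    {v : ι → ℝ} (hv : 0 ≤ v) : A *ᵥ v ≤ B *ᵥ v := fun i =>
  Finset.sum_le_sum fun j _ => mul_le_mul_of_nonneg_right (hAB i j) (hv j)

theorem Matrix.neg_mulVec_apply_le_mul_sum_negPart {B : Matrix ι ι ℝ} {L : ℝ}
    (hB : ∀ i j, 0 ≤ B i j) (hBL : ∀ i j, B i j ≤ L) (v : ι → ℝ) (i : ι) :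
    -(B *ᵥ v) i ≤ L * ∑ j, (v j)⁻ := by
  rw [Matrix.mulVec, dotProduct, ← Finset.sum_neg_distrib, Finset.mul_sum]
  refine Finset.sum_le_sum fun j _ => ?_
  calc -(B i j * v j) = B i j * -v j := by ring
    _ ≤ B i j * (v j)⁻ := mul_le_mul_of_nonneg_left (neg_le_negPart _) (hB i j)
    _ ≤ L * (v j)⁻ := mul_le_mul_of_nonneg_right (hBL i j) (negPart_nonneg _)

theorem locallyIntegrable_mulVec {A : ℝ → Matrix ι ι ℝ} {K : ℝ}
    (hA : ∀ i j, Measurable fun s => A s i j) (hAK : ∀ s i j, |A s i j| ≤ K)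
    {x : ℝ → ι → ℝ} (hx : Continuous x) : LocallyIntegrable fun s => A s *ᵥ x s := by
  rw [locallyIntegrable_iff]
  intro k hk
  rw [IntegrableOn, integrable_pi_iff]
  intro i
  simp only [Matrix.mulVec, dotProduct]
  refine integrable_finsetSum _ fun j _ => ?_
  exact Integrable.bdd_mul (((continuous_apply j).comp hx).continuousOn.integrableOn_compact hk)
    (hA i j).aestronglyMeasurable (ae_of_all _ fun s => hAK s i j)

theorem Matrix.hasDerivAt_exp_smul_mulVec [DecidableEq ι] (A : Matrix ι ι ℝ) (v : ι → ℝ) (t : ℝ) :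
    HasDerivAt (fun s : ℝ => NormedSpace.exp (s • A) *ᵥ v)
      (A *ᵥ (NormedSpace.exp (t • A) *ᵥ v)) t := by
  let _ : NormedRing (Matrix ι ι ℝ) := Matrix.linftyOpNormedRing
  let _ : NormedAlgebra ℝ (Matrix ι ι ℝ) := Matrix.linftyOpNormedAlgebra
  let L : Matrix ι ι ℝ →L[ℝ] ι → ℝ :=
    LinearMap.toContinuousLinearMap ((LinearMap.applyₗ v).comp Matrix.toLin'.toLinearMap)
  rw [Matrix.mulVec_mulVec]
  exact L.hasFDerivAt.comp_hasDerivAt t (hasDerivAt_exp_smul_const' (𝕂 := ℝ) A t)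

theorem Matrix.continuous_exp_smul_mulVec [DecidableEq ι] (A : Matrix ι ι ℝ) (v : ι → ℝ) :
    Continuous fun s : ℝ => NormedSpace.exp (s • A) *ᵥ v :=
  continuous_iff_continuousAt.2 fun s => (A.hasDerivAt_exp_smul_mulVec v s).continuousAt

theorem Matrix.exp_smul_mulVec_eq_add_integral [DecidableEq ι] (A : Matrix ι ι ℝ) (v : ι → ℝ)
    (t : ℝ) :
    NormedSpace.exp (t • A) *ᵥ v = v + ∫ s in (0 : ℝ)..t, A *ᵥ (NormedSpace.exp (s • A) *ᵥ v) := by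
  rw [intervalIntegral.integral_eq_sub_of_hasDerivAt (fun s _ => A.hasDerivAt_exp_smul_mulVec v s)
    ((A.mulVecLin.continuous_of_finiteDimensional.comp
      (A.continuous_exp_smul_mulVec v)).intervalIntegrable 0 t)]
  simp

theorem nonneg_of_integral_eq_of_nonneg_mulVec_le {B : ℝ → Matrix ι ι ℝ} {L : ℝ}
    (hB : ∀ s i j, 0 ≤ B s i j) (hBL : ∀ s i j, B s i j ≤ L) {w G : ℝ → ι → ℝ}
    (hG : LocallyIntegrable G) (hw₀ : 0 ≤ w 0)
    (hwG : ∀ t, 0 ≤ t → w t = w 0 + ∫ s in (0 : ℝ)..t, G s)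
    (hBG : ∀ s, 0 ≤ s → B s *ᵥ w s ≤ G s) :
    ∀ t, 0 ≤ t → 0 ≤ w t := by
  -- Built from the primitive rather than from `w`, so that `m` is continuous on all of `ℝ`.
  set m : ℝ → ℝ := fun s => ∑ j, (w 0 j + ∫ r in (0 : ℝ)..s, G r j)⁻ with hm_def
  have hm : Continuous m := by
    refine continuous_finsetSum _ fun j _ => continuous_negPart.comp ?_
    exact continuous_const.add
      (intervalIntegral.continuous_primitive (fun a b => (hG.intervalIntegrable a b).eval j) 0)
  have hm0 : 0 ≤ m := fun s => Finset.sum_nonneg fun j _ => negPart_nonneg _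
  have hwm : ∀ t, 0 ≤ t → m t = ∑ j, (w t j)⁻ := fun t ht => by
    simp only [hm_def, hwG t ht, Pi.add_apply,
      intervalIntegral.integral_apply (hG.intervalIntegrable 0 t)]
  have hgron : ∀ t, 0 ≤ t → m t ≤ (Fintype.card ι * L) * ∫ s in (0 : ℝ)..t, m s := by
    intro t ht
    have hterm : ∀ i, (w t i)⁻ ≤ L * ∫ s in (0 : ℝ)..t, m s := by
      intro i
      have hGi := (hG.intervalIntegrable 0 t).eval i
      have hpt : ∀ s ∈ Icc 0 t, -G s i ≤ L * m s := fun s hs => by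
        rw [hwm s hs.1]
        exact (neg_le_neg (hBG s hs.1 i)).trans
          (Matrix.neg_mulVec_apply_le_mul_sum_negPart (hB s) (hBL s) (w s) i)
      have hint := intervalIntegral.integral_mono_on (f := fun s => -G s i) ht hGi.neg
        ((hm.intervalIntegrable 0 t).const_mul L) hpt
      rw [intervalIntegral.integral_neg, intervalIntegral.integral_const_mul] at hint
      have hwt : w t i = w 0 i + ∫ s in (0 : ℝ)..t, G s i := by
        rw [hwG t ht, Pi.add_apply, intervalIntegral.integral_apply (hG.intervalIntegrable 0 t)]
      have hL : 0 ≤ L := (hB 0 i i).trans (hBL 0 i i)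
      have hmint : 0 ≤ ∫ s in (0 : ℝ)..t, m s :=
        intervalIntegral.integral_nonneg ht fun s _ => hm0 s
      have hw₀i : 0 ≤ w 0 i := hw₀ i
      rw [negPart_def]
      exact sup_le (by linarith) (mul_nonneg hL hmint)
    calc m t = ∑ i, (w t i)⁻ := hwm t ht
      _ ≤ Finset.univ.card • (L * ∫ s in (0 : ℝ)..t, m s) :=
        Finset.sum_le_card_nsmul _ _ _ fun i _ => hterm i
      _ = (Fintype.card ι * L) * ∫ s in (0 : ℝ)..t, m s := by
        rw [Finset.card_univ, nsmul_eq_mul, mul_assoc]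
  intro t ht i
  have hzero := eq_zero_of_le_mul_integral hm hm0 hgron t ht
  rw [hwm t ht, Finset.sum_eq_zero_iff_of_nonneg fun j _ => negPart_nonneg _] at hzero
  exact negPart_eq_zero.1 (hzero i (Finset.mem_univ i))

theorem nonneg_of_integral_eq_of_isMetzler_mulVec_le [DecidableEq ι] {A : ℝ → Matrix ι ι ℝ} {K : ℝ}
    (hA : ∀ s, (A s).IsMetzler) (hAK : ∀ s i j, |A s i j| ≤ K) {x g : ℝ → ι → ℝ}
    (hg : LocallyIntegrable g) (hx₀ : 0 ≤ x 0)
    (hxg : ∀ t, 0 ≤ t → x t = x 0 + ∫ s in (0 : ℝ)..t, g s)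
    (hAg : ∀ s, 0 ≤ s → A s *ᵥ x s ≤ g s) :
    ∀ t, 0 ≤ t → 0 ≤ x t := by
  set X : ℝ → ι → ℝ := fun t => x 0 + ∫ s in (0 : ℝ)..t, g s
  have hX : Continuous X :=
    continuous_const.add (intervalIntegral.continuous_primitive hg.intervalIntegrable 0)
  have hG : LocallyIntegrable fun s => exp (K * s) • (g s + K • X s) :=
    (hg.add (hX.const_smul K).locallyIntegrable).continuous_smul (by fun_prop)
  have hnonneg := nonneg_of_integral_eq_of_nonneg_mulVec_le (B := fun s => A s + K • 1)
    (L := 2 * K) (w := fun t => exp (K * t) • X t) ?_ ?_ hG ?_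
    (fun t _ => by
      simp only [X, mul_zero, exp_zero, one_smul, intervalIntegral.integral_same, add_zero]
      exact exp_mul_smul_add_integral hg K (x 0) t) ?_
  · intro t ht
    rw [hxg t ht]
    exact fun i => nonneg_of_mul_nonneg_right (hnonneg t ht i) (exp_pos _)
  · intro s i j
    have hK := (abs_nonneg _).trans (hAK s i j)
    rw [Matrix.add_apply, Matrix.smul_apply, Matrix.one_apply, smul_eq_mul]
    split_ifs with hij
    · subst hij
      linarith [neg_abs_le (A s i i), hAK s i i]
    · simpa using hA s i j hij
  · intro s i j
    have hK := (abs_nonneg _).trans (hAK s i j)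
    rw [Matrix.add_apply, Matrix.smul_apply, Matrix.one_apply, smul_eq_mul]
    split_ifs <;> linarith [le_abs_self (A s i j), hAK s i j]
  · simpa [X] using hx₀
  · intro s hs
    have hshift : (A s + K • 1) *ᵥ (exp (K * s) • X s) = exp (K * s) • (A s *ᵥ X s + K • X s) := by
      rw [Matrix.add_mulVec, Matrix.smul_mulVec, Matrix.one_mulVec, Matrix.mulVec_smul,
        smul_comm K, smul_add (exp (K * s)) (A s *ᵥ X s)]
    have hxX : x s = X s := hxg s hs
    rw [hshift, ← hxX]
    exact smul_le_smul_of_nonneg_left (add_le_add_left (hAg s hs) _) (exp_pos _).le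

theorem exp_smul_mulVec_le_of_integral_eq [DecidableEq ι] {A : ℝ → Matrix ι ι ℝ} {K : ℝ}
    (hA_meas : ∀ i j, Measurable fun s => A s i j) (hA : ∀ s, (A s).IsMetzler)
    (hAK : ∀ s i j, |A s i j| ≤ K) {A₀ : Matrix ι ι ℝ} (hA₀ : A₀.IsMetzler)
    (hA₀A : ∀ s i j, A₀ i j ≤ A s i j) {x : ℝ → ι → ℝ} (hx : Continuous x) (hx₀ : 0 ≤ x 0)
    (hxA : ∀ t, 0 ≤ t → x t = x 0 + ∫ s in (0 : ℝ)..t, A s *ᵥ x s) :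
    ∀ t, 0 ≤ t → NormedSpace.exp (t • A₀) *ᵥ x 0 ≤ x t := by
  have hAx : LocallyIntegrable fun s => A s *ᵥ x s := locallyIntegrable_mulVec hA_meas hAK hx
  have hx_nonneg := nonneg_of_integral_eq_of_isMetzler_mulVec_le hA hAK hAx hx₀ hxA
    fun s _ => le_rfl
  set y : ℝ → ι → ℝ := fun s => NormedSpace.exp (s • A₀) *ᵥ x 0
  have hy : ∀ t, y t = x 0 + ∫ s in (0 : ℝ)..t, A₀ *ᵥ y s :=
    A₀.exp_smul_mulVec_eq_add_integral (x 0)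
  obtain ⟨K₀, hK₀⟩ := Finite.exists_le fun ij : ι × ι => |A₀ ij.1 ij.2|
  have hA₀y : LocallyIntegrable fun s => A₀ *ᵥ y s :=
    locallyIntegrable_mulVec (A := fun _ => A₀) (fun _ _ => measurable_const)
      (fun _ i j => hK₀ (i, j)) (A₀.continuous_exp_smul_mulVec (x 0))
  have hcmp := nonneg_of_integral_eq_of_isMetzler_mulVec_le (A := fun _ => A₀) (x := x - y)
    (fun _ => hA₀) (fun _ i j => hK₀ (i, j)) (hAx.sub hA₀y) ?_ ?_ ?_
  · exact fun t ht => sub_nonneg.1 (hcmp t ht)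
  · rw [Pi.sub_apply, hy 0, intervalIntegral.integral_same, add_zero, sub_self]
  · intro t ht
    simp only [Pi.sub_apply]
    rw [hxA t ht, hy t, hy 0,
      intervalIntegral.integral_sub (hAx.intervalIntegrable 0 t) (hA₀y.intervalIntegrable 0 t),
      intervalIntegral.integral_same]
    abel
  · intro s hs
    rw [Pi.sub_apply, Matrix.mulVec_sub]
    exact sub_le_sub_right (Matrix.mulVec_le_mulVec_of_le (hA₀A s) (hx_nonneg s hs)) _

theorem Matrix.abs_apply_le_card_mul_of_sum_col_eq_zero {M : Matrix ι ι ℝ} {C : ℝ}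
    (hcol : ∀ j, ∑ i, M i j = 0) (hoff : ∀ i j, i ≠ j → M i j ∈ Icc 0 C) (hC : 0 ≤ C)
    (i j : ι) : |M i j| ≤ Fintype.card ι * C := by
  classical
  by_cases hij : i = j
  · subst hij
    set S := ∑ k ∈ Finset.univ.erase i, M k i
    have hsplit : M i i + S = 0 := by
      rw [Finset.add_sum_erase _ (fun k => M k i) (Finset.mem_univ i), hcol i]
    have hS0 : 0 ≤ S := Finset.sum_nonneg fun k hk => (hoff k i (Finset.ne_of_mem_erase hk)).1
    have hSC : S ≤ (Finset.univ.erase i).card • C :=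
      Finset.sum_le_card_nsmul _ _ _ fun k hk => (hoff k i (Finset.ne_of_mem_erase hk)).2
    have hcard : ((Finset.univ.erase i).card : ℝ) * C ≤ Fintype.card ι * C :=
      mul_le_mul_of_nonneg_right (by exact_mod_cast Finset.card_erase_le) hC
    rw [nsmul_eq_mul] at hSC
    rw [abs_of_nonpos (by linarith)]
    linarith
  · obtain ⟨h0, hC'⟩ := hoff i j hij
    rw [abs_of_nonneg h0]
    exact hC'.trans (le_mul_of_one_le_left hC (by exact_mod_cast Fintype.card_pos_iff.2 ⟨i⟩))

end

theorem IsTridiagGenFamily.apply_mem_Icc_of_ne {N : ℕ} {c C : ℝ} {Q : ℝ → Matrix (Fin N) (Fin N) ℝ}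
    (hQ : IsTridiagGenFamily N c C Q) (hc : 0 ≤ c) (hcC : c ≤ C) (t : ℝ) {i j : Fin N}
    (hij : i ≠ j) : Q t i j ∈ Icc 0 C := by
  have hval : (i : ℕ) ≠ j := Fin.val_ne_of_ne hij
  by_cases hadj : (i : ℕ) + 1 = j ∨ (j : ℕ) + 1 = i
  · obtain ⟨hcQ, hQC⟩ := (hQ.2 t).2.1 i j hadj
    exact ⟨hc.trans hcQ, hQC⟩
  · rw [(hQ.2 t).1 i j (by omega)]
    exact ⟨le_rfl, hc.trans hcC⟩

theorem IsTridiagGenFamily.abs_apply_le {N : ℕ} {c C : ℝ} {Q : ℝ → Matrix (Fin N) (Fin N) ℝ}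
    (hQ : IsTridiagGenFamily N c C Q) (hc : 0 ≤ c) (hcC : c ≤ C) (t : ℝ) (i j : Fin N) :
    |Q t i j| ≤ N * C := by
  simpa using Matrix.abs_apply_le_card_mul_of_sum_col_eq_zero (hQ.2 t).2.2
    (fun _ _ => hQ.apply_mem_Icc_of_ne hc hcC t) (hc.trans hcC) i j

theorem tridiag_solution_ge_exp_lowerMatrix_general {N : ℕ}
    (c C : ℝ) (hc : 0 < c) (hcC : c ≤ C)
    (Q : ℝ → Matrix (Fin N) (Fin N) ℝ)
    (hQ : IsTridiagGenFamily N c C Q)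
    (Qbar : Matrix (Fin N) (Fin N) ℝ)
    (hle : ∀ (t : ℝ) (i j : Fin N), Qbar i j ≤ Q t i j)
    (hdiag : ∀ i j : Fin N, ((i : ℕ) + 1 = (j : ℕ) ∨ (j : ℕ) + 1 = (i : ℕ)) →
      c ≤ Qbar i j)
    (hzero : ∀ i j : Fin N, i ≠ j →
      ¬ ((i : ℕ) + 1 = (j : ℕ) ∨ (j : ℕ) + 1 = (i : ℕ)) → Qbar i j = 0)
    (p₀ : Fin N → ℝ) (hp₀ : ∀ i, 0 ≤ p₀ i)
    (p : ℝ → (Fin N → ℝ))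
    (hpcont : ContinuousOn p (Set.Ici (0 : ℝ)))
    (hpsol : ∀ t : ℝ, 0 ≤ t → p t = p₀ + ∫ s in (0 : ℝ)..t, (Q s).mulVec (p s)) :
    ∀ t : ℝ, 0 ≤ t → ∀ i, (NormedSpace.exp (t • Qbar)).mulVec p₀ i ≤ p t i := by
  have hQK : ∀ s i j, |Q s i j| ≤ N * C := hQ.abs_apply_le hc.le hcC
  have hQM : ∀ s, (Q s).IsMetzler := fun s _ _ hij => (hQ.apply_mem_Icc_of_ne hc.le hcC s hij).1
  have hQbarM : Qbar.IsMetzler := fun i j hij => by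
    by_cases hadj : (i : ℕ) + 1 = j ∨ (j : ℕ) + 1 = i
    · exact hc.le.trans (hdiag i j hadj)
    · exact (hzero i j hij hadj).ge
  set P : ℝ → Fin N → ℝ := fun s => p (max s 0)
  have hPp : ∀ s, 0 ≤ s → P s = p s := fun s hs => by simp only [P, max_eq_left hs]
  have hPc : Continuous P := hpcont.comp_continuous (by fun_prop) fun s => le_max_right s 0
  have hP₀ : P 0 = p₀ := by simpa [hPp 0 le_rfl] using hpsol 0 le_rfl
  have hPeq : ∀ t, 0 ≤ t → P t = P 0 + ∫ s in (0 : ℝ)..t, Q s *ᵥ P s := fun t ht => by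
    rw [hPp t ht, hP₀, hpsol t ht]
    congr 1
    refine intervalIntegral.integral_congr fun s hs => ?_
    rw [uIcc_of_le ht] at hs
    simp only [hPp s hs.1]
  intro t ht
  rw [← hP₀, ← hPp t ht]
  exact exp_smul_mulVec_le_of_integral_eq hQ.1 hQM hQK hQbarM hle hPc (hP₀ ▸ hp₀) hPeq t ht

/-- **Comparison theorem.** Let `Q` be a measurable family of tridiagonal generators
with off-diagonal entries in `[c, C]` (`0 < c ≤ C`, `N ≥ 2`), and let `Q̄` be a
constant matrix with `Q̄ ≤ Q t` entrywise for all `t`, whose sub- and super-diagonal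
entries are `≥ c` and whose remaining off-diagonal entries vanish. Then any
Carathéodory solution `p` of `p' = Q(t) p`, `p 0 = p₀`, with `p₀` componentwise
nonnegative satisfies `p t ≥ exp (t Q̄) p₀` componentwise for all `t ≥ 0`. -/
theorem tridiag_solution_ge_exp_lowerMatrix {N : ℕ} (hN : 2 ≤ N)
    (c C : ℝ) (hc : 0 < c) (hcC : c ≤ C)
    (Q : ℝ → Matrix (Fin N) (Fin N) ℝ)
    (hQ : IsTridiagGenFamily N c C Q)
    (Qbar : Matrix (Fin N) (Fin N) ℝ)
    (hle : ∀ (t : ℝ) (i j : Fin N), Qbar i j ≤ Q t i j)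
    (hdiag : ∀ i j : Fin N, ((i : ℕ) + 1 = (j : ℕ) ∨ (j : ℕ) + 1 = (i : ℕ)) →
      c ≤ Qbar i j)
    (hzero : ∀ i j : Fin N, i ≠ j →
      ¬ ((i : ℕ) + 1 = (j : ℕ) ∨ (j : ℕ) + 1 = (i : ℕ)) → Qbar i j = 0)
    (p₀ : Fin N → ℝ) (hp₀ : ∀ i, 0 ≤ p₀ i)
    (p : ℝ → (Fin N → ℝ))
    (hpcont : ContinuousOn p (Set.Ici (0 : ℝ)))
    (hpsol : ∀ t : ℝ, 0 ≤ t → p t = p₀ + ∫ s in (0 : ℝ)..t, (Q s).mulVec (p s)) :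
    ∀ t : ℝ, 0 ≤ t → ∀ i, (NormedSpace.exp (t • Qbar)).mulVec p₀ i ≤ p t i :=
  tridiag_solution_ge_exp_lowerMatrix_general c C hc hcC Q hQ Qbar hle hdiag hzero p₀ hp₀ p hpcont
    hpsol
end
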